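/- Let K be a convex body in S^d ⊆ ℝ^{d+1}, let H be a (d−1)-dimensional great sphere of S^d with H ∩ K = ∅, and let h ∈ S^d be such that H is the boundary of the open hemisphere H_h and K ⊆ H_h. Then a finite point set {p_1, …, p_n} ⊆ H illuminates K if and only if the open hemispheres H_{p_1}, …, H_{p_n} — whose boundary great spheres all contain the point −h, which lies in the interior of K* — have the property that every proper exposed face of K* is contained in at least one of them. -/

import Mathlib

open RealInnerProductSpace Metric Set

noncomputable section

/-- Euclidean `n`-space. -/
abbrev Euc (n : ℕ) := EuclideanSpace ℝ (Fin n)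

/-- The unit sphere `S^d` in `ℝ^{d+1}`. -/
def uSphere (d : ℕ) : Set (Euc (d + 1)) := Metric.sphere 0 1

/-- Radial (normalizing) projection onto the unit sphere. -/
def nproj {n : ℕ} (x : Euc n) : Euc n := ‖x‖⁻¹ • x

/-- The spherical segment (shorter great-circle arc) with endpoints `p` and `q`
(meaningful when `p ≠ -q`). -/
def sphSeg {n : ℕ} (p q : Euc n) : Set (Euc n) :=
  (fun t : ℝ => nproj ((1 - t) • p + t • q)) '' Set.Icc 0 1

/-- The relative interior of the spherical segment with endpoints `p` and `q`. -/
def sphOpenSeg {n : ℕ} (p q : Euc n) : Set (Euc n) :=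
  (fun t : ℝ => nproj ((1 - t) • p + t • q)) '' Set.Ioo 0 1

/-- The great circle through `p` and `q`. -/
def greatCircle (d : ℕ) (p q : Euc (d + 1)) : Set (Euc (d + 1)) :=
  {z ∈ uSphere d | z ∈ Submodule.span ℝ {p, q}}

/-- The open hemisphere with center `x`. -/
def openHemi (d : ℕ) (x : Euc (d + 1)) : Set (Euc (d + 1)) :=
  {y ∈ uSphere d | 0 < ⟪x, y⟫}

/-- The `(d-1)`-dimensional great sphere of `S^d` with pole `u`. -/
def greatSphere (d : ℕ) (u : Euc (d + 1)) : Set (Euc (d + 1)) :=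
  {y ∈ uSphere d | ⟪u, y⟫ = 0}

/-- A set `C ⊆ S^d` is spherically convex if it is contained in an open hemisphere
and contains the shorter arc connecting any two of its points. -/
def SphConvex (d : ℕ) (C : Set (Euc (d + 1))) : Prop :=
  C ⊆ uSphere d ∧ (∃ x ∈ uSphere d, C ⊆ openHemi d x) ∧
    ∀ p ∈ C, ∀ q ∈ C, sphSeg p q ⊆ C

/-- The interior of `K` relative to the sphere `S^d`. -/
def sphInt (d : ℕ) (K : Set (Euc (d + 1))) : Set (Euc (d + 1)) :=
  {x ∈ uSphere d | ∃ U : Set (Euc (d + 1)), IsOpen U ∧ x ∈ U ∧ U ∩ uSphere d ⊆ K}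

/-- The boundary of a closed set `K ⊆ S^d` relative to the sphere `S^d`. -/
def sphBd (d : ℕ) (K : Set (Euc (d + 1))) : Set (Euc (d + 1)) := K \ sphInt d K

/-- A convex body in `S^d`: a compact spherically convex set with nonempty interior
relative to `S^d`. -/
def IsSphBody (d : ℕ) (K : Set (Euc (d + 1))) : Prop :=
  IsCompact K ∧ SphConvex d K ∧ (sphInt d K).Nonempty

/-- The boundary point `q` of `K` is illuminated from the point `p`. -/
def SphIlluminated (d : ℕ) (K : Set (Euc (d + 1))) (p q : Euc (d + 1)) : Prop :=
  q ≠ -p ∧ sphSeg p q ∩ sphInt d K = ∅ ∧ (greatCircle d p q ∩ sphInt d K).Nonempty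

/-- The set `S` illuminates the convex body `K ⊆ S^d`. -/
def SphIlluminates (d : ℕ) (K S : Set (Euc (d + 1))) : Prop :=
  ∀ q ∈ sphBd d K, ∃ p ∈ S, SphIlluminated d K p q

/-- The illumination number of a convex body `K` in `S^d`: the smallest cardinality of
a set illuminating `K` and lying on a `(d-1)`-dimensional great sphere disjoint from `K`. -/
def sphIllumNumber (d : ℕ) (K : Set (Euc (d + 1))) : ℕ∞ :=
  sInf {n : ℕ∞ | ∃ u ∈ uSphere d, greatSphere d u ∩ K = ∅ ∧
    ∃ S : Finset (Euc (d + 1)), ↑S ⊆ greatSphere d u ∧ SphIlluminates d K ↑S ∧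
      (S.card : ℕ∞) = n}

/-- A convex body in a Euclidean space: compact, convex, with nonempty interior. -/
def IsConvexBody {n : ℕ} (K : Set (Euc n)) : Prop :=
  IsCompact K ∧ Convex ℝ K ∧ (interior K).Nonempty

/-- The boundary point `p` of `K` is illuminated from the direction `v`. -/
def IlluminatedDir {n : ℕ} (K : Set (Euc n)) (v p : Euc n) : Prop :=
  ∃ t : ℝ, 0 < t ∧ p + t • v ∈ interior K

/-- The finite set of unit vectors `D` illuminates the convex body `K`. -/
def IlluminatesDirs {n : ℕ} (D : Finset (Euc n)) (K : Set (Euc n)) : Prop :=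
  (∀ v ∈ D, ‖v‖ = 1) ∧ ∀ p ∈ frontier K, ∃ v ∈ D, IlluminatedDir K v p

/-- The illumination number of a convex body in Euclidean space. -/
def illumNumber {n : ℕ} (K : Set (Euc n)) : ℕ∞ :=
  sInf {m : ℕ∞ | ∃ D : Finset (Euc n), IlluminatesDirs D K ∧ (D.card : ℕ∞) = m}

/-- The illumination number of a convex body `K` of an affine subspace of a Euclidean
space, computed within the affine span of `K` (directions are parallel to the affine
span; interior and boundary are relative to the affine span). -/
def intIllumNumber {n : ℕ} (K : Set (Euc n)) : ℕ∞ :=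
  sInf {m : ℕ∞ | ∃ D : Finset (Euc n),
    (∀ v ∈ D, ‖v‖ = 1 ∧ v ∈ (affineSpan ℝ K).direction) ∧
    (∀ p ∈ intrinsicFrontier ℝ K, ∃ v ∈ D, ∃ t : ℝ, 0 < t ∧
      p + t • v ∈ intrinsicInterior ℝ K) ∧
    (D.card : ℕ∞) = m}

/-- A face of a convex body `K` in Euclidean space: a convex subset `F ⊆ K` such that
any segment of `K` whose relative interior meets `F` is contained in `F`. -/
def IsFace {n : ℕ} (K F : Set (Euc n)) : Prop :=
  F ⊆ K ∧ Convex ℝ F ∧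
    ∀ x ∈ K, ∀ y ∈ K, (openSegment ℝ x y ∩ F).Nonempty → segment ℝ x y ⊆ F

/-- The dimension of a subset of a Euclidean space (dimension of its affine hull). -/
def faceDim {n : ℕ} (F : Set (Euc n)) : ℕ := Module.finrank ℝ (vectorSpan ℝ F)

/-- A face of a convex body `K` in `S^d`: a spherically convex subset `F ⊆ K` such that
any spherical segment of `K` whose relative interior meets `F` is contained in `F`. -/
def IsSphFace (d : ℕ) (K F : Set (Euc (d + 1))) : Prop :=
  F ⊆ K ∧ SphConvex d F ∧
    ∀ p ∈ K, ∀ q ∈ K, (sphOpenSeg p q ∩ F).Nonempty → sphSeg p q ⊆ F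

/-- The (spherical) dimension of a subset `F` of `S^d`: one less than the dimension of
its linear hull. -/
def sphFaceDim (d : ℕ) (F : Set (Euc (d + 1))) : ℕ :=
  Module.finrank ℝ (Submodule.span ℝ F) - 1

/-- The polar body of a convex body `K ⊆ S^d`. -/
def sphPolar (d : ℕ) (K : Set (Euc (d + 1))) : Set (Euc (d + 1)) :=
  {x ∈ uSphere d | ∀ y ∈ K, ⟪x, y⟫ ≤ 0}

/-- An exposed face of a convex body `L` in `S^d`: a nonempty intersection of `L`
with a supporting great sphere. -/
def IsSphExposedFace (d : ℕ) (L F : Set (Euc (d + 1))) : Prop :=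
  F.Nonempty ∧ ∃ u ∈ uSphere d, (∀ y ∈ L, ⟪u, y⟫ ≤ 0) ∧ F = {y ∈ L | ⟪u, y⟫ = 0}

/-- The conjugate face of an exposed face `F` of a convex body `K ⊆ S^d`. -/
def conjFace (d : ℕ) (K F : Set (Euc (d + 1))) : Set (Euc (d + 1)) :=
  {x ∈ sphPolar d K | ∀ y ∈ F, ⟪x, y⟫ = 0}

/-- Two Euclidean convex bodies are combinatorially equivalent if there is a
homeomorphism between their boundaries mapping faces to faces. -/
def CombEquiv {n : ℕ} (K K' : Set (Euc n)) : Prop :=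
  ∃ h : (frontier K) ≃ₜ (frontier K'),
    ∀ X : Set (frontier K),
      IsFace K (Subtype.val '' X) ↔ IsFace K' (Subtype.val '' (h '' X))

/-- The combinatorial illumination number of a Euclidean convex body `K`: the smallest
number of directions that illuminate some convex body combinatorially equivalent to `K`. -/
def combIllumNumber {n : ℕ} (K : Set (Euc n)) : ℕ∞ :=
  sInf {m : ℕ∞ | ∃ K' : Set (Euc n), IsConvexBody K' ∧ CombEquiv K K' ∧
    ∃ D : Finset (Euc n), IlluminatesDirs D K' ∧ (D.card : ℕ∞) = m}

/-- A convex polytope in `S^d`: a convex body that is the intersection of finitely many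
closed hemispheres. -/
def IsSphPolytope (d : ℕ) (P : Set (Euc (d + 1))) : Prop :=
  IsSphBody d P ∧ ∃ s : Finset (Euc (d + 1)), (∀ u ∈ s, u ∈ uSphere d) ∧
    P = uSphere d ∩ {y | ∀ u ∈ s, ⟪u, y⟫ ≤ 0}

end

/-!
Pass from `K` to the closed convex cone `ℝ≥0 • K ⊆ ℝ^{d+1}`, which has nonempty interior. The outer
unit normals of `K` at a boundary point `q` form the exposed face `{x ∈ K* | ⟪q, x⟫ = 0}` of
`K*`, and by the bipolar theorem every exposed face of `K*` is of this form. Separating the cone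
from the ray `q - ℝ≥0 • p` shows that a point `p ∈ H` illuminates `q` exactly when every outer
unit normal at `q` lies in `H_p`. Finally `-h` is interior to `K*` because the compact set `K`
stays a positive distance away from `H`.
-/

section ConeSeparation

variable {E : Type*} [NormedAddCommGroup E] [InnerProductSpace ℝ E]

lemma inner_neg_of_mem_interior {S : Set E} {x z : E} (hx : x ≠ 0)
    (hS : ∀ w ∈ S, ⟪x, w⟫ ≤ 0) (hz : z ∈ interior S) : ⟪x, z⟫ < 0 := by
  have hmaps : innerSL ℝ x '' interior S ⊆ interior (Iic 0) :=
    interior_maximal (image_subset_iff.2 fun w hw => hS w (interior_subset hw))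
      ((innerSL ℝ x).isOpenMap_of_ne_zero (fun h0 => hx (by simpa using DFunLike.congr_fun h0 x))
        _ isOpen_interior)
  rw [interior_Iic] at hmaps
  exact hmaps (mem_image_of_mem _ hz)

lemma nonpos_of_forall_le_of_smul_mem {C : Set E}
    (hcone : ∀ z ∈ C, ∀ t : ℝ, 0 ≤ t → t • z ∈ C) {f : StrongDual ℝ E} {b : ℝ}
    (hf : ∀ z ∈ C, f z ≤ b) {z : E} (hz : z ∈ C) : f z ≤ 0 := by
  by_contra! hpos
  have hb : 0 < b := hpos.trans_le (hf z hz)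
  have h2b := hf _ (hcone z hz (2 * b / f z) (by positivity))
  rw [map_smul, smul_eq_mul, div_mul_cancel₀ _ hpos.ne'] at h2b
  linarith

lemma exists_norm_eq_one_inner_eq_pos_mul [CompleteSpace E] {f : StrongDual ℝ E} (hf : f ≠ 0) :
    ∃ x : E, ‖x‖ = 1 ∧ ∃ c : ℝ, 0 < c ∧ ∀ w, ⟪x, w⟫ = c * f w := by
  set v := (InnerProductSpace.toDual ℝ E).symm f
  have hv : v ≠ 0 := by simpa [v] using hf
  refine ⟨(‖v‖⁻¹ : ℝ) • v, norm_smul_inv_norm hv, ‖v‖⁻¹, by positivity, fun w => ?_⟩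
  rw [real_inner_smul_left, InnerProductSpace.toDual_symm_apply]

variable [CompleteSpace E] {C : Set E} (hC : Convex ℝ C)
  (hcone : ∀ z ∈ C, ∀ t : ℝ, 0 ≤ t → t • z ∈ C)
include hC hcone

lemma exists_unit_normal_of_disjoint_interior (hCint : (interior C).Nonempty) {S : Set E}
    (hS : Convex ℝ S) (hCS : Disjoint (interior C) S) {q : E} (hqC : q ∈ C) (hqS : q ∈ S) :
    ∃ x : E, ‖x‖ = 1 ∧ (∀ z ∈ C, ⟪x, z⟫ ≤ 0) ∧ ⟪x, q⟫ = 0 ∧ ∀ w ∈ S, 0 ≤ ⟪x, w⟫ := by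
  obtain ⟨f, u, hf, hfC, hfS⟩ :=
    geometric_hahn_banach_of_nonempty_interior hC hS hCS hCint ⟨q, hqS⟩
  have hfC' : ∀ z ∈ C, f z ≤ 0 := fun z hz => nonpos_of_forall_le_of_smul_mem hcone hfC hz
  have hu : 0 ≤ u := by simpa using hfC 0 (by simpa using hcone q hqC 0 le_rfl)
  obtain ⟨x, hx, c, hc, hxf⟩ := exists_norm_eq_one_inner_eq_pos_mul hf
  refine ⟨x, hx, fun z hz => ?_, ?_, fun w hw => ?_⟩
  · rw [hxf]
    exact mul_nonpos_of_nonneg_of_nonpos hc.le (hfC' z hz)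
  · rw [hxf, le_antisymm (hfC' q hqC) (hu.trans (hfS q hqS)), mul_zero]
  · rw [hxf]
    exact mul_nonneg hc.le (hu.trans (hfS w hw))

lemma exists_unit_normal_inner_pos_of_notMem (hCcl : IsClosed C) (hC0 : (0 : E) ∈ C) {u : E}
    (hu : u ∉ C) : ∃ x : E, ‖x‖ = 1 ∧ (∀ z ∈ C, ⟪x, z⟫ ≤ 0) ∧ 0 < ⟪x, u⟫ := by
  obtain ⟨f, b, hfC, hbu⟩ := geometric_hahn_banach_closed_point hC hCcl hu
  have hb : 0 < b := by simpa using hfC 0 hC0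
  have hf : f ≠ 0 := by
    rintro rfl
    simp only [zero_apply] at hbu
    linarith
  obtain ⟨x, hx, c, hc, hxf⟩ := exists_norm_eq_one_inner_eq_pos_mul hf
  refine ⟨x, hx, fun z hz => ?_, ?_⟩
  · rw [hxf]
    exact mul_nonpos_of_nonneg_of_nonpos hc.le
      (nonpos_of_forall_le_of_smul_mem hcone (fun z hz => (hfC z hz).le) hz)
  · rw [hxf]
    exact mul_pos hc (hb.trans hbu)

end ConeSeparation

section RadialProjection

variable {n : ℕ}

lemma norm_nproj {z : Euc n} (hz : z ≠ 0) : ‖nproj z‖ = 1 := by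
  rw [nproj, norm_smul, norm_inv, norm_norm, inv_mul_cancel₀ (norm_ne_zero_iff.2 hz)]

lemma norm_smul_nproj (z : Euc n) : ‖z‖ • nproj z = z := by
  rcases eq_or_ne z 0 with rfl | hz
  · simp [nproj]
  · rw [nproj, smul_smul, mul_inv_cancel₀ (norm_ne_zero_iff.2 hz), one_smul]

lemma nproj_of_norm_eq_one {z : Euc n} (hz : ‖z‖ = 1) : nproj z = z := by
  simp [nproj, hz]

lemma nproj_smul_of_pos {t : ℝ} (ht : 0 < t) (z : Euc n) : nproj (t • z) = nproj z := by
  rw [nproj, nproj, norm_smul, Real.norm_of_nonneg ht.le, smul_smul]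
  congr 1
  field_simp

lemma continuousOn_nproj : ContinuousOn (nproj : Euc n → Euc n) {z | z ≠ 0} :=
  (continuous_norm.continuousOn.inv₀ fun _ hz => norm_ne_zero_iff.2 hz).smul continuousOn_id

lemma inner_eq_norm_mul_inner_nproj (x z : Euc n) : ⟪x, z⟫ = ‖z‖ * ⟪x, nproj z⟫ := by
  rw [← real_inner_smul_right, norm_smul_nproj]

end RadialProjection

lemma mem_uSphere_iff {d : ℕ} {x : Euc (d + 1)} : x ∈ uSphere d ↔ ‖x‖ = 1 :=
  mem_sphere_zero_iff_norm

lemma ne_zero_of_mem_uSphere {d : ℕ} {x : Euc (d + 1)} (hx : x ∈ uSphere d) : x ≠ 0 := by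
  rintro rfl
  simp [uSphere] at hx

lemma sphInt_subset {d : ℕ} {K : Set (Euc (d + 1))} : sphInt d K ⊆ K :=
  fun _ ⟨hx, _, _, hxU, hUK⟩ => hUK ⟨hxU, hx⟩

lemma mem_sphSeg_of_add_eq {n : ℕ} {p q z : Euc n} (hz : ‖z‖ = 1) {α β : ℝ} (hα : 0 ≤ α)
    (hβ : 0 ≤ β) (hz' : α • p + β • q = z) : z ∈ sphSeg p q := by
  have hαβ : 0 < α + β := by
    refine lt_of_le_of_ne (add_nonneg hα hβ) fun h0 => ?_
    obtain ⟨rfl, rfl⟩ : α = 0 ∧ β = 0 := ⟨by linarith, by linarith⟩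
    simp [← hz'] at hz
  refine ⟨β / (α + β), ⟨by positivity, (div_le_one hαβ).2 (by linarith)⟩, ?_⟩
  have hcomb : (1 - β / (α + β)) • p + (β / (α + β)) • q = (α + β)⁻¹ • z := by
    rw [← hz']
    match_scalars <;> field_simp
    ring
  simp only [hcomb, nproj_smul_of_pos (inv_pos.2 hαβ), nproj_of_norm_eq_one hz]

/-- The cone `ℝ≥0 • K` spanned by a subset `K` of the sphere. -/
def sphCone {n : ℕ} (K : Set (Euc n)) : Set (Euc n) := insert 0 {z | nproj z ∈ K}

section SphCone

variable {d : ℕ} {K : Set (Euc (d + 1))}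

lemma smul_mem_sphCone {t : ℝ} (ht : 0 ≤ t) {z : Euc (d + 1)} (hz : z ∈ sphCone K) :
    t • z ∈ sphCone K := by
  rcases ht.eq_or_lt with rfl | ht
  · simp [sphCone]
  rcases hz with rfl | hz
  · simp [sphCone]
  · exact Or.inr (show nproj (t • z) ∈ K by rwa [nproj_smul_of_pos ht])

lemma mem_sphCone_of_mem (hKs : K ⊆ uSphere d) {y : Euc (d + 1)} (hy : y ∈ K) :
    y ∈ sphCone K :=
  Or.inr (show nproj y ∈ K by rwa [nproj_of_norm_eq_one (mem_uSphere_iff.1 (hKs hy))])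

lemma mem_of_mem_sphCone {z : Euc (d + 1)} (hz : z ∈ uSphere d) (hzK : z ∈ sphCone K) :
    z ∈ K := by
  rcases hzK with rfl | hzK
  · exact absurd rfl (ne_zero_of_mem_uSphere hz)
  · rwa [← nproj_of_norm_eq_one (mem_uSphere_iff.1 hz)]

lemma inner_nonpos_of_mem_sphCone {x : Euc (d + 1)} (hx : ∀ y ∈ K, ⟪x, y⟫ ≤ 0)
    {z : Euc (d + 1)} (hz : z ∈ sphCone K) : ⟪x, z⟫ ≤ 0 := by
  rcases hz with rfl | hz
  · simp
  · rw [inner_eq_norm_mul_inner_nproj]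
    exact mul_nonpos_of_nonneg_of_nonpos (norm_nonneg z) (hx _ hz)

lemma isClosed_sphCone (hK : IsClosed K) : IsClosed (sphCone K) := by
  have hcompl : (sphCone K)ᶜ = {z | z ≠ 0} ∩ nproj ⁻¹' Kᶜ := by
    ext z
    simp [sphCone]
  rw [← isOpen_compl_iff, hcompl]
  exact continuousOn_nproj.isOpen_inter_preimage isOpen_ne hK.isOpen_compl

lemma convex_sphCone (hseg : ∀ p ∈ K, ∀ q ∈ K, sphSeg p q ⊆ K) : Convex ℝ (sphCone K) := by
  have hpair : ∀ y ∈ K, ∀ y' ∈ K, ∀ s t : ℝ, 0 ≤ s → 0 ≤ t → s • y + t • y' ∈ sphCone K := by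
    intro y hy y' hy' s t hs ht
    rcases (add_nonneg hs ht).eq_or_lt with hst | hst
    · obtain ⟨rfl, rfl⟩ : s = 0 ∧ t = 0 := ⟨by linarith, by linarith⟩
      simp [sphCone]
    have hmem : nproj ((1 - t / (s + t)) • y + (t / (s + t)) • y') ∈ K :=
      hseg y hy y' hy' ⟨t / (s + t), ⟨by positivity, (div_le_one hst).2 (by linarith)⟩, rfl⟩
    have hcomb : s • y + t • y' = (s + t) • ((1 - t / (s + t)) • y + (t / (s + t)) • y') := by
      match_scalars <;> field_simp
      ring
    rw [hcomb]
    exact smul_mem_sphCone hst.le (Or.inr hmem)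
  intro x hx y hy a b ha hb _
  rcases hx with rfl | hx
  · simpa using smul_mem_sphCone hb hy
  rcases hy with rfl | hy
  · simpa using smul_mem_sphCone ha (Or.inr hx)
  rw [← norm_smul_nproj x, ← norm_smul_nproj y, smul_smul, smul_smul]
  exact hpair _ hx _ hy _ _ (by positivity) (by positivity)

lemma sphInt_eq_uSphere_inter_interior_sphCone :
    sphInt d K = uSphere d ∩ interior (sphCone K) := by
  ext q
  constructor
  · rintro ⟨hq, U, hU, hqU, hUK⟩
    refine ⟨hq, mem_interior.2 ⟨{z | z ≠ 0} ∩ nproj ⁻¹' U, ?_,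
      continuousOn_nproj.isOpen_inter_preimage isOpen_ne hU, ne_zero_of_mem_uSphere hq, ?_⟩⟩
    · rintro z ⟨hz, hzU⟩
      exact Or.inr (hUK ⟨hzU, mem_uSphere_iff.2 (norm_nproj hz)⟩)
    · rwa [mem_preimage, nproj_of_norm_eq_one (mem_uSphere_iff.1 hq)]
  · rintro ⟨hq, hqC⟩
    exact ⟨hq, _, isOpen_interior, hqC, fun z hz => mem_of_mem_sphCone hz.2 (interior_subset hz.1)⟩

lemma smul_mem_interior_sphCone {t : ℝ} (ht : 0 < t) {z : Euc (d + 1)}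
    (hz : z ∈ interior (sphCone K)) : t • z ∈ interior (sphCone K) := by
  refine interior_mono ?_ (by rw [interior_smul₀ ht.ne']; exact smul_mem_smul_set hz)
  rintro _ ⟨v, hv, rfl⟩
  exact smul_mem_sphCone ht.le hv

lemma nproj_mem_sphInt_iff {w : Euc (d + 1)} (hw : w ≠ 0) :
    nproj w ∈ sphInt d K ↔ w ∈ interior (sphCone K) := by
  simp only [sphInt_eq_uSphere_inter_interior_sphCone, mem_inter_iff, mem_uSphere_iff,
    norm_nproj hw, true_and]
  refine ⟨fun h => ?_, smul_mem_interior_sphCone (inv_pos.2 (norm_pos_iff.2 hw))⟩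
  simpa [norm_smul_nproj] using smul_mem_interior_sphCone (norm_pos_iff.2 hw) h

lemma inner_neg_of_mem_sphPolar_of_mem_sphInt {x y : Euc (d + 1)} (hx : x ∈ sphPolar d K)
    (hy : y ∈ sphInt d K) : ⟪x, y⟫ < 0 := by
  rw [sphInt_eq_uSphere_inter_interior_sphCone] at hy
  exact inner_neg_of_mem_interior (ne_zero_of_mem_uSphere hx.1)
    (fun _ hz => inner_nonpos_of_mem_sphCone hx.2 hz) hy.2

end SphCone

/-- The outer unit normals of `K` at `q`: the face of `K*` conjugate to `q`. -/
def normalFace (d : ℕ) (K : Set (Euc (d + 1))) (q : Euc (d + 1)) : Set (Euc (d + 1)) :=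
  {x ∈ sphPolar d K | ⟪q, x⟫ = 0}

namespace IsSphBody

variable {d : ℕ} {K : Set (Euc (d + 1))} (hK : IsSphBody d K)
include hK

lemma subset_uSphere : K ⊆ uSphere d := hK.2.1.1

lemma convex_sphCone : Convex ℝ (sphCone K) := _root_.convex_sphCone hK.2.1.2.2

lemma interior_sphCone_nonempty : (interior (sphCone K)).Nonempty := by
  obtain ⟨w, hw⟩ := hK.2.2
  rw [sphInt_eq_uSphere_inter_interior_sphCone] at hw
  exact ⟨w, hw.2⟩

lemma exists_mem_normalFace_of_disjoint {S : Set (Euc (d + 1))} (hS : Convex ℝ S)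
    (hKS : Disjoint (interior (sphCone K)) S) {q : Euc (d + 1)} (hqK : q ∈ K) (hqS : q ∈ S) :
    ∃ x ∈ normalFace d K q, ∀ w ∈ S, 0 ≤ ⟪x, w⟫ := by
  obtain ⟨x, hx, hxK, hxq, hxS⟩ := exists_unit_normal_of_disjoint_interior hK.convex_sphCone
    (fun _ hz _ ht => smul_mem_sphCone ht hz) hK.interior_sphCone_nonempty hS hKS
    (mem_sphCone_of_mem hK.subset_uSphere hqK) hqS
  exact ⟨x, ⟨⟨mem_uSphere_iff.2 hx, fun y hy => hxK y (mem_sphCone_of_mem hK.subset_uSphere hy)⟩,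
    by rwa [real_inner_comm]⟩, hxS⟩

lemma normalFace_nonempty {q : Euc (d + 1)} (hq : q ∈ sphBd d K) :
    (normalFace d K q).Nonempty := by
  have hqC : q ∉ interior (sphCone K) := fun hqC =>
    hq.2 (by rw [sphInt_eq_uSphere_inter_interior_sphCone]; exact ⟨hK.subset_uSphere hq.1, hqC⟩)
  obtain ⟨x, hx, -⟩ := hK.exists_mem_normalFace_of_disjoint (convex_singleton q)
    (disjoint_singleton_right.2 hqC) hq.1 rfl
  exact ⟨x, hx⟩

lemma mem_of_forall_inner_sphPolar_nonpos {u : Euc (d + 1)} (hu : u ∈ uSphere d)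
    (hpolar : ∀ x ∈ sphPolar d K, ⟪u, x⟫ ≤ 0) : u ∈ K := by
  by_contra huK
  obtain ⟨x, hx, hxK, hxu⟩ := exists_unit_normal_inner_pos_of_notMem hK.convex_sphCone
    (fun _ hz _ ht => smul_mem_sphCone ht hz) (isClosed_sphCone hK.1.isClosed)
    (mem_insert 0 _) (fun huC => huK (mem_of_mem_sphCone hu huC))
  have := hpolar x ⟨mem_uSphere_iff.2 hx, fun y hy =>
    hxK y (mem_sphCone_of_mem hK.subset_uSphere hy)⟩
  rw [real_inner_comm] at this
  linarith

lemma isSphExposedFace_normalFace {q : Euc (d + 1)} (hq : q ∈ sphBd d K) :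
    IsSphExposedFace d (sphPolar d K) (normalFace d K q) :=
  ⟨hK.normalFace_nonempty hq, q, hK.subset_uSphere hq.1,
    fun y hy => by rw [real_inner_comm]; exact hy.2 q hq.1, rfl⟩

lemma exists_mem_sphBd_eq_normalFace {F : Set (Euc (d + 1))}
    (hF : IsSphExposedFace d (sphPolar d K) F) : ∃ u ∈ sphBd d K, F = normalFace d K u := by
  obtain ⟨⟨x, hx⟩, u, hu, hupolar, rfl⟩ := hF
  refine ⟨u, ⟨hK.mem_of_forall_inner_sphPolar_nonpos hu hupolar, fun huint => ?_⟩, rfl⟩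
  have := inner_neg_of_mem_sphPolar_of_mem_sphInt hx.1 huint
  rw [real_inner_comm, hx.2] at this
  exact lt_irrefl 0 this

end IsSphBody

section Illumination

variable {d : ℕ} {K : Set (Euc (d + 1))} {h : Euc (d + 1)}

lemma neg_mem_sphInt_sphPolar (hK : IsSphBody d K) (hh : h ∈ uSphere d)
    (hKh : K ⊆ openHemi d h) : -h ∈ sphInt d (sphPolar d K) := by
  obtain ⟨y₀, hy₀, hmin⟩ := hK.1.exists_isMinOn (f := fun y => ⟪h, y⟫) (hK.2.2.mono sphInt_subset)
    (continuous_const.inner continuous_id).continuousOn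
  refine ⟨by simpa [mem_uSphere_iff] using hh, ball (-h) ⟪h, y₀⟫, isOpen_ball,
    mem_ball_self (hKh hy₀).2, fun x ⟨hxball, hx⟩ => ⟨hx, fun y hy => ?_⟩⟩
  have hxh : ‖x + h‖ < ⟪h, y₀⟫ := by rwa [mem_ball, dist_eq_norm, sub_neg_eq_add] at hxball
  have hCS : ⟪x + h, y⟫ ≤ ‖x + h‖ := by
    simpa [mem_uSphere_iff.1 (hK.subset_uSphere hy)] using real_inner_le_norm (x + h) y
  have hy₀y : ⟪h, y₀⟫ ≤ ⟪h, y⟫ := hmin hy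
  rw [inner_add_left] at hCS
  linarith

lemma normalFace_ne_sphPolar (hh : h ∈ uSphere d) (hKh : K ⊆ openHemi d h) {q : Euc (d + 1)}
    (hq : q ∈ K) : normalFace d K q ≠ sphPolar d K := by
  intro heq
  have hneg : -h ∈ normalFace d K q := heq ▸ ⟨by simpa [mem_uSphere_iff] using hh,
    fun y hy => by simpa [inner_neg_left] using (hKh hy).2.le⟩
  have hqh := hneg.2
  rw [inner_neg_right, neg_eq_zero, real_inner_comm] at hqh
  linarith [(hKh hq).2]

variable {p q : Euc (d + 1)}

lemma normalFace_subset_openHemi_of_sphIlluminated (hKh : K ⊆ openHemi d h) (hph : ⟪h, p⟫ = 0)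
    (hq : q ∈ K) (hill : SphIlluminated d K p q) : normalFace d K q ⊆ openHemi d p := by
  obtain ⟨-, hseg, z, ⟨hz, hzspan⟩, hzint⟩ := hill
  obtain ⟨α, β, hαβ⟩ := Submodule.mem_span_pair.1 hzspan
  rintro x ⟨hxpolar, hqx⟩
  refine ⟨hxpolar.1, ?_⟩
  by_contra! hpx
  have hxz : ⟪x, z⟫ < 0 := inner_neg_of_mem_sphPolar_of_mem_sphInt hxpolar hzint
  have hhz : 0 < ⟪h, z⟫ := (hKh (sphInt_subset hzint)).2
  rw [real_inner_comm] at hqx hpx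
  rw [← hαβ, inner_add_right, real_inner_smul_right, real_inner_smul_right] at hxz hhz
  rw [hqx] at hxz
  rw [hph] at hhz
  have hα : 0 ≤ α := by nlinarith
  have hβ : 0 ≤ β := by nlinarith [(hKh hq).2]
  exact (eq_empty_iff_forall_notMem.1 hseg z)
    ⟨mem_sphSeg_of_add_eq (mem_uSphere_iff.1 hz) hα hβ hαβ, hzint⟩

lemma sphSeg_inter_sphInt_eq_empty (hK : IsSphBody d K) (hq : q ∈ sphBd d K)
    (hpos : normalFace d K q ⊆ openHemi d p) : sphSeg p q ∩ sphInt d K = ∅ := by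
  obtain ⟨x, hx⟩ := hK.normalFace_nonempty hq
  refine eq_empty_iff_forall_notMem.2 fun z ⟨⟨t, ht, hz⟩, hzint⟩ => ?_
  have hxp : 0 < ⟪p, x⟫ := (hpos hx).2
  have hxq : ⟪q, x⟫ = 0 := hx.2
  have hxw : 0 ≤ ⟪x, (1 - t) • p + t • q⟫ := by
    rw [inner_add_right, real_inner_smul_right, real_inner_smul_right, real_inner_comm p,
      real_inner_comm q, hxq]
    nlinarith [ht.2]
  have hxz := inner_neg_of_mem_sphPolar_of_mem_sphInt hx.1 hzint
  dsimp only at hz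
  rw [← hz, nproj, real_inner_smul_right] at hxz
  exact hxz.not_ge (mul_nonneg (by positivity) hxw)

lemma greatCircle_inter_sphInt_nonempty (hK : IsSphBody d K) (hKh : K ⊆ openHemi d h)
    (hph : ⟪h, p⟫ = 0) (hq : q ∈ sphBd d K) (hpos : normalFace d K q ⊆ openHemi d p) :
    (greatCircle d p q ∩ sphInt d K).Nonempty := by
  -- Otherwise the ray `q - ℝ≥0 • p` misses the interior of the cone, and a separating hyperplane
  -- is an outer normal `x` at `q` with `⟪p, x⟫ ≤ 0`.
  by_contra hempty
  have hray : ∀ s : ℝ, AffineMap.lineMap q (q - p) s = q - s • p := fun s => by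
    rw [AffineMap.lineMap_apply_module]
    module
  have hdisj : Disjoint (interior (sphCone K)) (AffineMap.lineMap q (q - p) '' Ici (0 : ℝ)) := by
    refine disjoint_right.2 ?_
    rintro _ ⟨s, -, rfl⟩ hwC
    rw [hray] at hwC
    have hw : q - s • p ≠ 0 := fun hw0 => by
      have := (hKh hq.1).2
      rw [sub_eq_zero.1 hw0, real_inner_smul_right, hph, mul_zero] at this
      exact lt_irrefl 0 this
    have hspan : q - s • p ∈ Submodule.span ℝ {p, q} :=
      Submodule.mem_span_pair.2 ⟨-s, 1, by module⟩
    exact hempty ⟨nproj (q - s • p), ⟨mem_uSphere_iff.2 (norm_nproj hw),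
      Submodule.smul_mem _ _ hspan⟩, (nproj_mem_sphInt_iff hw).2 hwC⟩
  obtain ⟨x, hx, hxray⟩ := hK.exists_mem_normalFace_of_disjoint ((convex_Ici 0).affine_image _)
    hdisj hq.1 ⟨0, mem_Ici.2 le_rfl, by simp [hray]⟩
  have hxq1 := hxray _ ⟨1, mem_Ici.2 zero_le_one, rfl⟩
  have hxp : 0 < ⟪p, x⟫ := (hpos hx).2
  have hxq : ⟪q, x⟫ = 0 := hx.2
  rw [hray, one_smul, inner_sub_right, real_inner_comm p, real_inner_comm q, hxq] at hxq1
  linarith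

lemma sphIlluminated_iff (hK : IsSphBody d K) (hKh : K ⊆ openHemi d h) (hph : ⟪h, p⟫ = 0)
    (hq : q ∈ sphBd d K) : SphIlluminated d K p q ↔ normalFace d K q ⊆ openHemi d p := by
  refine ⟨normalFace_subset_openHemi_of_sphIlluminated hKh hph hq.1, fun hpos => ⟨?_,
    sphSeg_inter_sphInt_eq_empty hK hq hpos, greatCircle_inter_sphInt_nonempty hK hKh hph hq hpos⟩⟩
  rintro rfl
  have := (hKh hq.1).2
  rw [inner_neg_right, hph, neg_zero] at this
  exact lt_irrefl 0 this

end Illumination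

theorem stmt17_general (d : ℕ) (K : Set (Euc (d + 1))) (hK : IsSphBody d K)
    (h : Euc (d + 1)) (hh : h ∈ uSphere d)
    (hKh : K ⊆ openHemi d h)
    (n : ℕ) (p : Fin n → Euc (d + 1)) (hp : ∀ i, p i ∈ greatSphere d h) :
    -h ∈ sphInt d (sphPolar d K) ∧ (∀ i, ⟪p i, -h⟫ = 0) ∧
    (SphIlluminates d K (Set.range p) ↔
      ∀ F, IsSphExposedFace d (sphPolar d K) F → F ≠ sphPolar d K →
        ∃ i, F ⊆ openHemi d (p i)) := by
  refine ⟨neg_mem_sphInt_sphPolar hK hh hKh,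
    fun i => by rw [inner_neg_right, real_inner_comm, (hp i).2, neg_zero], ⟨?_, ?_⟩⟩
  · intro hill F hF _
    obtain ⟨u, hu, rfl⟩ := hK.exists_mem_sphBd_eq_normalFace hF
    obtain ⟨_, ⟨i, rfl⟩, hi⟩ := hill u hu
    exact ⟨i, (sphIlluminated_iff hK hKh (hp i).2 hu).1 hi⟩
  · intro hcover q hq
    obtain ⟨i, hi⟩ := hcover _ (hK.isSphExposedFace_normalFace hq)
      (normalFace_ne_sphPolar hh hKh hq.1)
    exact ⟨p i, mem_range_self i, (sphIlluminated_iff hK hKh (hp i).2 hq).2 hi⟩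

/-- Let `H` be a great sphere disjoint from the convex body `K ⊆ S^d`, bounding the open
hemisphere `H_h ⊇ K`. Then `{p_1, …, p_n} ⊆ H` illuminates `K` iff the open hemispheres
`H_{p_i}` — whose boundary great spheres all contain `-h ∈ int K*` — cover every proper
exposed face of `K*`. -/
theorem stmt17 (d : ℕ) (K : Set (Euc (d + 1))) (hK : IsSphBody d K)
    (h : Euc (d + 1)) (hh : h ∈ uSphere d) (hdisj : greatSphere d h ∩ K = ∅)
    (hKh : K ⊆ openHemi d h)
    (n : ℕ) (p : Fin n → Euc (d + 1)) (hp : ∀ i, p i ∈ greatSphere d h) :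
    -h ∈ sphInt d (sphPolar d K) ∧ (∀ i, ⟪p i, -h⟫ = 0) ∧
    (SphIlluminates d K (Set.range p) ↔
      ∀ F, IsSphExposedFace d (sphPolar d K) F → F ≠ sphPolar d K →
        ∃ i, F ⊆ openHemi d (p i)) :=
  stmt17_general d K hK h hh hKh n p hp
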